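/- arXiv:2507.11018 — 2 statements merged into one kernel-verified Lean document; each statement's English description precedes it below -/
import Mathlib

section
/- Uniform dominance of the optimal knowledge sequence: if (s,p) is an implementable contract and (s*,p*) is an optimal contract, then s_t ≤ s*_t for every t. -/
/-!
The joint value `Π_t + W_t` is the discounted surplus `Σ_k δ^k (π + w)(s_{t+k})`, in which payments
cancel. Adding (E-IC) at `t` and (P-IC) at `t + 1` therefore yields a condition on `s` alone,
and (E-IC) at `0` bounds the profit of any implementable contract by its surplus minus
`w 0 / (1 - δ)`. Conversely, every monotone `s` satisfying that condition attains the bound with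
the payments `p_{t+1} = (w s_t - w s_{t+1}) / (1 - δ)`, which keep (E-IC) binding. Since `π + w`
is increasing and `w` decreasing, the condition passes to pointwise maxima, so if `s_t > s*_t`
for some `t`, then `max s s*` is implementable and has strictly larger surplus, hence strictly
larger profit, than `s*`.
-/

open Set Filter

/-- Principal's continuation value `Π_t(s,p) = Σ_{τ=t}^∞ δ^{τ−t}(π(s_τ) − p_τ)`. -/
noncomputable def PiVal (δ : ℝ) (π : ℝ → ℝ) (s p : ℕ → ℝ) (t : ℕ) : ℝ :=
  ∑' k : ℕ, δ ^ k * (π (s (t + k)) - p (t + k))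

/-- Expert's continuation value `W_t(s,p) = Σ_{τ=t}^∞ δ^{τ−t}(w(s_τ) + p_τ)`. -/
noncomputable def WVal (δ : ℝ) (w : ℝ → ℝ) (s p : ℕ → ℝ) (t : ℕ) : ℝ :=
  ∑' k : ℕ, δ ^ k * (w (s (t + k)) + p (t + k))

/-- A contract: `s` takes values in `[0,1]`, `s 0 = 0`, and `t ↦ δ^t·p_t` is summable. -/
def IsContract (δ : ℝ) (s p : ℕ → ℝ) : Prop :=
  (∀ t, s t ∈ Set.Icc (0 : ℝ) 1) ∧ s 0 = 0 ∧ Summable fun t => δ ^ t * p t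

/-- Implementability: feasibility (monotone `s`, nonnegative `p`) plus (P-IC) and (E-IC). -/
def Implementable (δ : ℝ) (π w : ℝ → ℝ) (s p : ℕ → ℝ) : Prop :=
  IsContract δ s p ∧ Monotone s ∧ (∀ t, 0 ≤ p t) ∧
  (∀ t, π (s t) / (1 - δ) ≤ PiVal δ π s p t) ∧
  (∀ t, w (s t) / (1 - δ) ≤ WVal δ w s p (t + 1))

/-- An optimal contract maximizes the principal's time-0 profit among implementable contracts. -/
def Optimal (δ : ℝ) (π w : ℝ → ℝ) (s p : ℕ → ℝ) : Prop :=
  Implementable δ π w s p ∧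
  ∀ s' p' : ℕ → ℝ, Implementable δ π w s' p' → PiVal δ π s' p' 0 ≤ PiVal δ π s p 0

section Discounting

variable {δ : ℝ}

lemma summable_pow_mul_of_abs_le (hδ0 : 0 ≤ δ) (hδ1 : δ < 1) {f : ℕ → ℝ} {C : ℝ}
    (hf : ∀ n, |f n| ≤ C) : Summable fun k => δ ^ k * f k := by
  refine .of_norm_bounded ((summable_geometric_of_lt_one hδ0 hδ1).mul_right C) fun k => ?_
  rw [Real.norm_eq_abs, abs_mul, abs_of_nonneg (pow_nonneg hδ0 k)]
  exact mul_le_mul_of_nonneg_left (hf k) (pow_nonneg hδ0 k)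

lemma summable_pow_mul_comp {K : Set ℝ} (hK : IsCompact K) {h : ℝ → ℝ} (hh : ContinuousOn h K)
    {s : ℕ → ℝ} (hs : ∀ n, s n ∈ K) (hδ0 : 0 ≤ δ) (hδ1 : δ < 1) :
    Summable fun k => δ ^ k * h (s k) := by
  obtain ⟨C, hC⟩ := hK.exists_bound_of_continuousOn hh
  exact summable_pow_mul_of_abs_le hδ0 hδ1 fun n => hC _ (hs n)

lemma summable_pow_mul_add_left (hδ : δ ≠ 0) {f : ℕ → ℝ} (hf : Summable fun k => δ ^ k * f k)
    (t : ℕ) : Summable fun k => δ ^ k * f (t + k) := by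
  refine (((summable_nat_add_iff t).2 hf).mul_left (δ ^ t)⁻¹).congr fun k => ?_
  rw [pow_add, add_comm k t]
  field_simp

lemma tsum_pow_mul_telescope (hδ : δ ≠ 1) {f : ℕ → ℝ} (hf : Summable fun k => δ ^ k * f k) :
    ∑' k, δ ^ k * (f (k + 1) + (f k - f (k + 1)) / (1 - δ)) = f 0 / (1 - δ) := by
  have hne : 1 - δ ≠ 0 := sub_ne_zero.2 hδ.symm
  have hterm : ∀ k, δ ^ k * (f (k + 1) + (f k - f (k + 1)) / (1 - δ))
      = (δ ^ k * f k - δ ^ (k + 1) * f (k + 1)) / (1 - δ) := by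
    intro k
    field_simp
    ring
  rw [tsum_congr hterm, tsum_div_const, hf.tsum_sub ((summable_nat_add_iff 1).2 hf),
    hf.tsum_eq_zero_add]
  simp

end Discounting

section Contracts

variable {δ : ℝ} {π w : ℝ → ℝ} {s p : ℕ → ℝ}

noncomputable def surplusVal (δ : ℝ) (π w : ℝ → ℝ) (s : ℕ → ℝ) (t : ℕ) : ℝ :=
  ∑' k : ℕ, δ ^ k * (π (s (t + k)) + w (s (t + k)))

lemma summable_surplusVal (hδ : δ ∈ Ioo 0 1) (hπc : ContinuousOn π (Icc 0 1))
    (hwc : ContinuousOn w (Icc 0 1)) (hs : ∀ n, s n ∈ Icc (0 : ℝ) 1) (t : ℕ) :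
    Summable fun k => δ ^ k * (π (s (t + k)) + w (s (t + k))) :=
  summable_pow_mul_comp isCompact_Icc (hπc.add hwc) (fun k => hs (t + k)) hδ.1.le hδ.2

lemma surplusVal_le_surplusVal (hδ : δ ∈ Ioo 0 1) (hπc : ContinuousOn π (Icc 0 1))
    (hwc : ContinuousOn w (Icc 0 1)) (hG : MonotoneOn (fun x => π x + w x) (Icc 0 1))
    {u v : ℕ → ℝ} (hu : ∀ n, u n ∈ Icc (0 : ℝ) 1) (hv : ∀ n, v n ∈ Icc (0 : ℝ) 1)
    (huv : ∀ n, u n ≤ v n) (t : ℕ) : surplusVal δ π w u t ≤ surplusVal δ π w v t :=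
  Summable.tsum_le_tsum
    (fun k => mul_le_mul_of_nonneg_left (hG (hu _) (hv _) (huv _)) (pow_nonneg hδ.1.le k))
    (summable_surplusVal hδ hπc hwc hu t) (summable_surplusVal hδ hπc hwc hv t)

lemma surplusVal_lt_surplusVal (hδ : δ ∈ Ioo 0 1) (hπc : ContinuousOn π (Icc 0 1))
    (hwc : ContinuousOn w (Icc 0 1)) (hG : StrictMonoOn (fun x => π x + w x) (Icc 0 1))
    {u v : ℕ → ℝ} (hu : ∀ n, u n ∈ Icc (0 : ℝ) 1) (hv : ∀ n, v n ∈ Icc (0 : ℝ) 1)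
    (huv : ∀ n, u n ≤ v n) (t i : ℕ) (hlt : u (t + i) < v (t + i)) :
    surplusVal δ π w u t < surplusVal δ π w v t :=
  Summable.tsum_lt_tsum (i := i)
    (fun k => mul_le_mul_of_nonneg_left (hG.monotoneOn (hu _) (hv _) (huv _))
      (pow_nonneg hδ.1.le k))
    (mul_lt_mul_of_pos_left (hG (hu _) (hv _) hlt) (pow_pos hδ.1 i))
    (summable_surplusVal hδ hπc hwc hu t) (summable_surplusVal hδ hπc hwc hv t)

lemma surplusVal_const (hδ : δ ∈ Ioo 0 1) (c : ℝ) (t : ℕ) :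
    surplusVal δ π w (fun _ => c) t = (π c + w c) / (1 - δ) := by
  rw [surplusVal, tsum_mul_right, tsum_geometric_of_lt_one hδ.1.le hδ.2, inv_mul_eq_div]

lemma IsContract.summable_profit (hc : IsContract δ s p) (hδ : δ ∈ Ioo 0 1)
    (hπc : ContinuousOn π (Icc 0 1)) (t : ℕ) :
    Summable fun k => δ ^ k * (π (s (t + k)) - p (t + k)) :=
  ((summable_pow_mul_comp isCompact_Icc hπc (fun k => hc.1 (t + k)) hδ.1.le hδ.2).sub
    (summable_pow_mul_add_left hδ.1.ne' hc.2.2 t)).congr fun k => by ring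

lemma IsContract.summable_wage (hc : IsContract δ s p) (hδ : δ ∈ Ioo 0 1)
    (hwc : ContinuousOn w (Icc 0 1)) (t : ℕ) :
    Summable fun k => δ ^ k * (w (s (t + k)) + p (t + k)) :=
  ((summable_pow_mul_comp isCompact_Icc hwc (fun k => hc.1 (t + k)) hδ.1.le hδ.2).add
    (summable_pow_mul_add_left hδ.1.ne' hc.2.2 t)).congr fun k => by ring

lemma IsContract.PiVal_add_WVal (hc : IsContract δ s p) (hδ : δ ∈ Ioo 0 1)
    (hπc : ContinuousOn π (Icc 0 1)) (hwc : ContinuousOn w (Icc 0 1)) (t : ℕ) :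
    PiVal δ π s p t + WVal δ w s p t = surplusVal δ π w s t := by
  rw [PiVal, WVal, ← (hc.summable_profit hδ hπc t).tsum_add (hc.summable_wage hδ hwc t)]
  exact tsum_congr fun k => by ring

lemma IsContract.WVal_eq_add (hc : IsContract δ s p) (hδ : δ ∈ Ioo 0 1)
    (hwc : ContinuousOn w (Icc 0 1)) (t : ℕ) :
    WVal δ w s p t = w (s t) + p t + δ * WVal δ w s p (t + 1) := by
  rw [WVal, (hc.summable_wage hδ hwc t).tsum_eq_zero_add, WVal, ← tsum_mul_left]
  simp only [pow_zero, one_mul, add_zero, pow_succ]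
  congr 1
  exact tsum_congr fun k => by rw [show t + (k + 1) = t + 1 + k by omega]; ring

lemma Implementable.PiVal_zero_le (himp : Implementable δ π w s p) (hδ : δ ∈ Ioo 0 1)
    (hπc : ContinuousOn π (Icc 0 1)) (hwc : ContinuousOn w (Icc 0 1)) :
    PiVal δ π s p 0 ≤ surplusVal δ π w s 0 - w 0 / (1 - δ) := by
  obtain ⟨hc, -, hpnn, -, hEIC⟩ := himp
  have hW : w (s 0) / (1 - δ) ≤ WVal δ w s p 0 := by
    have hgeom : w (s 0) / (1 - δ) = w (s 0) + δ * (w (s 0) / (1 - δ)) := by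
      field_simp [(sub_pos.2 hδ.2).ne']
      ring
    rw [hc.WVal_eq_add hδ hwc 0, hgeom]
    linarith [hpnn 0, mul_le_mul_of_nonneg_left (hEIC 0) hδ.1.le]
  rw [← hc.2.1]
  linarith [hc.PiVal_add_WVal hδ hπc hwc 0]

/-- The sum of (P-IC) at `t + 1` and (E-IC) at `t`, in which the payments cancel. -/
def SurplusCoversDeviations (δ : ℝ) (π w : ℝ → ℝ) (s : ℕ → ℝ) : Prop :=
  ∀ t, (π (s (t + 1)) + w (s t)) / (1 - δ) ≤ surplusVal δ π w s (t + 1)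

lemma Implementable.surplusCoversDeviations (himp : Implementable δ π w s p)
    (hδ : δ ∈ Ioo 0 1) (hπc : ContinuousOn π (Icc 0 1)) (hwc : ContinuousOn w (Icc 0 1)) :
    SurplusCoversDeviations δ π w s := fun t => by
  rw [add_div, ← himp.1.PiVal_add_WVal hδ hπc hwc (t + 1)]
  exact add_le_add (himp.2.2.2.1 (t + 1)) (himp.2.2.2.2 t)

lemma SurplusCoversDeviations.sup {u v : ℕ → ℝ} (hδ : δ ∈ Ioo 0 1)
    (hπc : ContinuousOn π (Icc 0 1)) (hwc : ContinuousOn w (Icc 0 1))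
    (hwa : AntitoneOn w (Icc 0 1)) (hG : MonotoneOn (fun x => π x + w x) (Icc 0 1))
    (hu : ∀ n, u n ∈ Icc (0 : ℝ) 1) (hv : ∀ n, v n ∈ Icc (0 : ℝ) 1)
    (hNu : SurplusCoversDeviations δ π w u) (hNv : SurplusCoversDeviations δ π w v) :
    SurplusCoversDeviations δ π w (u ⊔ v) := by
  have hm : ∀ n, (u ⊔ v) n ∈ Icc (0 : ℝ) 1 :=
    fun n => ⟨le_max_of_le_left (hu n).1, max_le (hu n).2 (hv n).2⟩
  intro t
  rcases max_choice (u (t + 1)) (v (t + 1)) with hmax | hmax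
  · calc (π ((u ⊔ v) (t + 1)) + w ((u ⊔ v) t)) / (1 - δ)
        ≤ (π (u (t + 1)) + w (u t)) / (1 - δ) := by
          rw [Pi.sup_apply, hmax]
          gcongr
          · exact (sub_pos.2 hδ.2).le
          · exact hwa (hu t) (hm t) le_sup_left
      _ ≤ surplusVal δ π w u (t + 1) := hNu t
      _ ≤ _ := surplusVal_le_surplusVal hδ hπc hwc hG hu hm (fun _ => le_sup_left) _
  · calc (π ((u ⊔ v) (t + 1)) + w ((u ⊔ v) t)) / (1 - δ)
        ≤ (π (v (t + 1)) + w (v t)) / (1 - δ) := by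
          rw [Pi.sup_apply, hmax]
          gcongr
          · exact (sub_pos.2 hδ.2).le
          · exact hwa (hv t) (hm t) le_sup_right
      _ ≤ surplusVal δ π w v (t + 1) := hNv t
      _ ≤ _ := surplusVal_le_surplusVal hδ hπc hwc hG hv hm (fun _ => le_sup_right) _

noncomputable def canonicalPay (δ : ℝ) (w : ℝ → ℝ) (s : ℕ → ℝ) : ℕ → ℝ
  | 0 => 0
  | n + 1 => (w (s n) - w (s (n + 1))) / (1 - δ)

lemma canonicalPay_nonneg (hδ : δ < 1) (hwa : AntitoneOn w (Icc 0 1))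
    (hs : ∀ n, s n ∈ Icc (0 : ℝ) 1) (hmono : Monotone s) : ∀ n, 0 ≤ canonicalPay δ w s n
  | 0 => le_rfl
  | n + 1 => div_nonneg (sub_nonneg.2 (hwa (hs n) (hs (n + 1)) (hmono n.le_succ)))
      (sub_pos.2 hδ).le

lemma isContract_canonicalPay (hδ : δ ∈ Ioo 0 1) (hwc : ContinuousOn w (Icc 0 1))
    (hs : ∀ n, s n ∈ Icc (0 : ℝ) 1) (hs0 : s 0 = 0) : IsContract δ s (canonicalPay δ w s) := by
  have hw := summable_pow_mul_comp isCompact_Icc hwc hs hδ.1.le hδ.2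
  refine ⟨hs, hs0, (summable_nat_add_iff 1).1 ?_⟩
  refine (((hw.mul_left δ).sub ((summable_nat_add_iff 1).2 hw)).div_const (1 - δ)).congr
    fun n => ?_
  simp only [canonicalPay, pow_succ]
  ring

lemma WVal_canonicalPay_succ (hδ : δ ∈ Ioo 0 1) (hwc : ContinuousOn w (Icc 0 1))
    (hs : ∀ n, s n ∈ Icc (0 : ℝ) 1) (t : ℕ) :
    WVal δ w s (canonicalPay δ w s) (t + 1) = w (s t) / (1 - δ) := by
  have hterm : ∀ k, δ ^ k * (w (s (t + 1 + k)) + canonicalPay δ w s (t + 1 + k))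
      = δ ^ k * (w (s (t + (k + 1))) + (w (s (t + k)) - w (s (t + (k + 1)))) / (1 - δ)) := by
    intro k
    rw [show t + 1 + k = t + k + 1 by omega]
    rfl
  rw [WVal, tsum_congr hterm, tsum_pow_mul_telescope (f := fun k => w (s (t + k))) hδ.2.ne
    (summable_pow_mul_comp isCompact_Icc hwc (fun k => hs (t + k)) hδ.1.le hδ.2), add_zero]

lemma WVal_canonicalPay_zero (hδ : δ ∈ Ioo 0 1) (hwc : ContinuousOn w (Icc 0 1))
    (hs : ∀ n, s n ∈ Icc (0 : ℝ) 1) (hs0 : s 0 = 0) :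
    WVal δ w s (canonicalPay δ w s) 0 = w (s 0) / (1 - δ) := by
  rw [(isContract_canonicalPay hδ hwc hs hs0).WVal_eq_add hδ hwc 0,
    WVal_canonicalPay_succ hδ hwc hs 0, canonicalPay]
  field_simp [(sub_pos.2 hδ.2).ne']
  ring

lemma implementable_canonicalPay (hδ : δ ∈ Ioo 0 1) (hπc : ContinuousOn π (Icc 0 1))
    (hwc : ContinuousOn w (Icc 0 1)) (hwa : AntitoneOn w (Icc 0 1))
    (hG : MonotoneOn (fun x => π x + w x) (Icc 0 1)) (hs : ∀ n, s n ∈ Icc (0 : ℝ) 1)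
    (hs0 : s 0 = 0) (hmono : Monotone s) (hN : SurplusCoversDeviations δ π w s) :
    Implementable δ π w s (canonicalPay δ w s) := by
  have hc := isContract_canonicalPay hδ hwc hs hs0
  refine ⟨hc, hmono, canonicalPay_nonneg hδ.2 hwa hs hmono, ?_,
    fun t => (WVal_canonicalPay_succ hδ hwc hs t).ge⟩
  rintro (_ | t)
  · have hS : (π (s 0) + w (s 0)) / (1 - δ) ≤ surplusVal δ π w s 0 := by
      rw [← surplusVal_const hδ (s 0) 0]
      exact surplusVal_le_surplusVal hδ hπc hwc hG (fun _ => hs 0) hs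
        (fun n => hmono (Nat.zero_le n)) 0
    rw [add_div] at hS
    linarith [hc.PiVal_add_WVal hδ hπc hwc 0, WVal_canonicalPay_zero hδ hwc hs hs0]
  · have hNt := hN t
    rw [add_div] at hNt
    linarith [hc.PiVal_add_WVal hδ hπc hwc (t + 1), WVal_canonicalPay_succ hδ hwc hs t]

lemma PiVal_canonicalPay_zero (hδ : δ ∈ Ioo 0 1) (hπc : ContinuousOn π (Icc 0 1))
    (hwc : ContinuousOn w (Icc 0 1)) (hs : ∀ n, s n ∈ Icc (0 : ℝ) 1) (hs0 : s 0 = 0) :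
    PiVal δ π s (canonicalPay δ w s) 0 = surplusVal δ π w s 0 - w 0 / (1 - δ) := by
  have := (isContract_canonicalPay hδ hwc hs hs0).PiVal_add_WVal hδ hπc hwc 0
  rw [WVal_canonicalPay_zero hδ hwc hs hs0, hs0] at this
  linarith

end Contracts

theorem optimal_uniformly_dominates_general
    (δ : ℝ) (hδ : δ ∈ Set.Ioo (0 : ℝ) 1) (π w : ℝ → ℝ)
    (hπc : ContinuousOn π (Set.Icc 0 1)) (hwc : ContinuousOn w (Set.Icc 0 1))
    (hwa : StrictAntiOn w (Set.Icc 0 1))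
    (hGm : StrictMonoOn (fun x => π x + w x) (Set.Icc 0 1))
    (s p sStar pStar : ℕ → ℝ)
    (himp : Implementable δ π w s p) (hopt : Optimal δ π w sStar pStar) :
    ∀ t, s t ≤ sStar t := by
  intro T
  by_contra! hlt
  obtain ⟨himpStar, hbest⟩ := hopt
  have hs := himp.1.1
  have hsStar := himpStar.1.1
  have hm : ∀ n, (s ⊔ sStar) n ∈ Icc (0 : ℝ) 1 :=
    fun n => ⟨le_max_of_le_left (hs n).1, max_le (hs n).2 (hsStar n).2⟩
  have hm0 : (s ⊔ sStar) 0 = 0 := by simp [himp.1.2.1, himpStar.1.2.1]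
  have hNm : SurplusCoversDeviations δ π w (s ⊔ sStar) :=
    (himp.surplusCoversDeviations hδ hπc hwc).sup hδ hπc hwc hwa.antitoneOn hGm.monotoneOn hs
      hsStar (himpStar.surplusCoversDeviations hδ hπc hwc)
  have himpM := implementable_canonicalPay hδ hπc hwc hwa.antitoneOn hGm.monotoneOn hm hm0
    (himp.2.1.sup himpStar.2.1) hNm
  have hlarger : surplusVal δ π w sStar 0 < surplusVal δ π w (s ⊔ sStar) 0 :=
    surplusVal_lt_surplusVal hδ hπc hwc hGm hsStar hm (fun _ => le_sup_right) 0 T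
      (by simpa using hlt)
  refine lt_irrefl (PiVal δ π sStar pStar 0) ?_
  calc PiVal δ π sStar pStar 0 ≤ surplusVal δ π w sStar 0 - w 0 / (1 - δ) :=
        himpStar.PiVal_zero_le hδ hπc hwc
    _ < surplusVal δ π w (s ⊔ sStar) 0 - w 0 / (1 - δ) := by linarith
    _ = PiVal δ π (s ⊔ sStar) (canonicalPay δ w (s ⊔ sStar)) 0 :=
        (PiVal_canonicalPay_zero hδ hπc hwc hm hm0).symm
    _ ≤ PiVal δ π sStar pStar 0 := hbest _ _ himpM

/-- The optimal knowledge sequence uniformly dominates any implementable one. -/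
theorem optimal_uniformly_dominates
    (δ : ℝ) (hδ : δ ∈ Set.Ioo (0 : ℝ) 1) (π w : ℝ → ℝ)
    (hπc : ContinuousOn π (Set.Icc 0 1)) (hwc : ContinuousOn w (Set.Icc 0 1))
    (hπm : StrictMonoOn π (Set.Icc 0 1)) (hwa : StrictAntiOn w (Set.Icc 0 1))
    (hGm : StrictMonoOn (fun x => π x + w x) (Set.Icc 0 1))
    (s p sStar pStar : ℕ → ℝ)
    (himp : Implementable δ π w s p) (hopt : Optimal δ π w sStar pStar) :
    ∀ t, s t ≤ sStar t :=
  optimal_uniformly_dominates_general δ hδ π w hπc hwc hwa hGm s p sStar pStar himp hopt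
end

section
/- Patience limit: for every t there exists c < 1 such that for every δ ∈ (0,1) and every contract (s,p) that is optimal at δ, one has s_t ≤ c; in particular the optimal knowledge level in any fixed period t stays bounded away from 1 as δ → 1. -/
open Set Filter

/-!
Summing (P-IC) at `t + 1` and (E-IC) at `t` cancels the transfers: the joint surplus from `t + 1`
on is at least `(π (s (t+1)) + w (s t)) / (1 - δ)`, and since `π ≤ π 1` and `w ∘ s` is
nonincreasing it is at most `(π 1 + w (s (t+1))) / (1 - δ)`. Hence
`w (s t) ≤ w (s (t+1)) + π 1 - π (s (t+1))` for every `δ`. If `s t ≤ c < 1`, the left side is at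
least `w c > w 1`, while by continuity at `1` the right side is close to `w 1` once `s (t+1)` is
close to `1`; this gives a bound `c' < 1` for `s (t+1)`, and induction on `t` finishes.
-/

lemma ContinuousWithinAt.exists_Ioc_forall_lt {α β : Type*} [TopologicalSpace α] [LinearOrder α]
    [OrderTopology α] [TopologicalSpace β] [LinearOrder β] [OrderTopology β] {f : α → β}
    {a b : α} {ε : β} (hab : a < b) (hf : ContinuousWithinAt f (Icc a b) b) (hε : f b < ε) :
    ∃ c < b, ∀ x ∈ Ioc c b, f x < ε := by
  rw [continuousWithinAt_Icc_iff_Iic hab] at hf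
  exact (mem_nhdsLE_iff_exists_Ioc_subset' hab).1 (hf (Iio_mem_nhds hε))

section Discounting

variable {δ : ℝ}

lemma summable_pow_mul_of_mem_Icc (hδ0 : 0 ≤ δ) (hδ1 : δ < 1) {f : ℕ → ℝ} {a b : ℝ}
    (hf : ∀ k, f k ∈ Icc a b) : Summable fun k => δ ^ k * f k := by
  refine Summable.of_norm_bounded ((summable_geometric_of_lt_one hδ0 hδ1).mul_right
    (max |a| |b|)) fun k => ?_
  rw [Real.norm_eq_abs, abs_mul, abs_of_nonneg (pow_nonneg hδ0 k)]
  exact mul_le_mul_of_nonneg_left (abs_le_max_abs_abs (hf k).1 (hf k).2) (pow_nonneg hδ0 k)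

lemma Summable.pow_mul_nat_add (hδ : δ ≠ 0) {p : ℕ → ℝ} (hp : Summable fun k => δ ^ k * p k)
    (n : ℕ) : Summable fun k => δ ^ k * p (n + k) := by
  refine (((summable_nat_add_iff n).2 hp).mul_left (δ ^ n)⁻¹).congr fun k => ?_
  rw [add_comm k n, pow_add, mul_assoc, inv_mul_cancel_left₀ (pow_ne_zero n hδ)]

lemma tsum_pow_mul_le_div (hδ0 : 0 ≤ δ) (hδ1 : δ < 1) {f : ℕ → ℝ} {M : ℝ}
    (hf : Summable fun k => δ ^ k * f k) (hM : ∀ k, f k ≤ M) :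
    ∑' k, δ ^ k * f k ≤ M / (1 - δ) :=
  calc ∑' k, δ ^ k * f k ≤ ∑' k : ℕ, δ ^ k * M :=
        hf.tsum_le_tsum (fun k => mul_le_mul_of_nonneg_left (hM k) (pow_nonneg hδ0 k))
          ((summable_geometric_of_lt_one hδ0 hδ1).mul_right M)
    _ = M / (1 - δ) := by rw [tsum_mul_right, tsum_geometric_of_lt_one hδ0 hδ1, inv_mul_eq_div]

lemma PiVal_add_WVal {π w : ℝ → ℝ} {s p : ℕ → ℝ} {t : ℕ}
    (hπ : Summable fun k => δ ^ k * π (s (t + k))) (hw : Summable fun k => δ ^ k * w (s (t + k)))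
    (hp : Summable fun k => δ ^ k * p (t + k)) :
    PiVal δ π s p t + WVal δ w s p t = ∑' k, δ ^ k * (π (s (t + k)) + w (s (t + k))) := by
  have hPi : Summable fun k => δ ^ k * (π (s (t + k)) - p (t + k)) := by
    simpa only [mul_sub] using hπ.sub hp
  have hWsum : Summable fun k => δ ^ k * (w (s (t + k)) + p (t + k)) := by
    simpa only [mul_add] using hw.add hp
  rw [PiVal, WVal, ← hPi.tsum_add hWsum]
  exact tsum_congr fun k => by ring

end Discounting

theorem Implementable.w_sub_w_succ_le_sub {δ : ℝ} {π w : ℝ → ℝ} {s p : ℕ → ℝ}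
    (hπ : MonotoneOn π (Icc 0 1)) (hw : AntitoneOn w (Icc 0 1)) (hδ : δ ∈ Ioo 0 1)
    (h : Implementable δ π w s p) (t : ℕ) :
    w (s t) - w (s (t + 1)) ≤ π 1 - π (s (t + 1)) := by
  obtain ⟨⟨hs, -, hp⟩, hmono, -, hPIC, hEIC⟩ := h
  have h0 : (0 : ℝ) ∈ Icc 0 1 := left_mem_Icc.2 zero_le_one
  have h1 : (1 : ℝ) ∈ Icc 0 1 := right_mem_Icc.2 zero_le_one
  have hπs : ∀ k, π (s k) ∈ Icc (π 0) (π 1) := fun k =>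
    ⟨hπ h0 (hs k) (hs k).1, hπ (hs k) h1 (hs k).2⟩
  have hws : ∀ k, w (s k) ∈ Icc (w 1) (w 0) := fun k =>
    ⟨hw (hs k) h1 (hs k).2, hw h0 (hs k) (hs k).1⟩
  have hπsum := summable_pow_mul_of_mem_Icc hδ.1.le hδ.2 fun k => hπs (t + 1 + k)
  have hwsum := summable_pow_mul_of_mem_Icc hδ.1.le hδ.2 fun k => hws (t + 1 + k)
  have hsurplus_eq := PiVal_add_WVal hπsum hwsum (hp.pow_mul_nat_add hδ.1.ne' (t + 1))
  have hsurplus_le : ∑' k, δ ^ k * (π (s (t + 1 + k)) + w (s (t + 1 + k))) ≤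
      (π 1 + w (s (t + 1))) / (1 - δ) :=
    tsum_pow_mul_le_div hδ.1.le hδ.2 (by simpa only [mul_add] using hπsum.add hwsum) fun k =>
      add_le_add (hπs _).2 (hw (hs _) (hs _) (hmono (Nat.le_add_right _ _)))
  have key : (π (s (t + 1)) + w (s t)) / (1 - δ) ≤ (π 1 + w (s (t + 1))) / (1 - δ) := by
    rw [add_div]
    linarith [hPIC (t + 1), hEIC t]
  have := (div_le_div_iff_of_pos_right (sub_pos.2 hδ.2)).1 key
  linarith

theorem exists_lt_one_forall_implementable_le (π w : ℝ → ℝ)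
    (hπc : ContinuousOn π (Icc 0 1)) (hwc : ContinuousOn w (Icc 0 1))
    (hπm : MonotoneOn π (Icc 0 1)) (hwa : StrictAntiOn w (Icc 0 1)) (t : ℕ) :
    ∃ c ∈ Ico (0 : ℝ) 1,
      ∀ δ ∈ Ioo (0 : ℝ) 1, ∀ s p : ℕ → ℝ, Implementable δ π w s p → s t ≤ c := by
  induction t with
  | zero => exact ⟨0, ⟨le_rfl, one_pos⟩, fun δ _ s p h => h.1.2.1.le⟩
  | succ t ih =>
    obtain ⟨c, ⟨hc0, hc1⟩, hbound⟩ := ih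
    have h1 : (1 : ℝ) ∈ Icc 0 1 := right_mem_Icc.2 zero_le_one
    have hc : c ∈ Icc 0 1 := ⟨hc0, hc1.le⟩
    obtain ⟨c', hc'1, hc'⟩ := ContinuousWithinAt.exists_Ioc_forall_lt zero_lt_one
      ((hwc.sub hπc) 1 h1) (show w 1 - π 1 < w c - π 1 by linarith [hwa hc h1 hc1])
    refine ⟨max c c', ⟨le_max_of_le_left hc0, max_lt hc1 hc'1⟩, fun δ hδ s p h => ?_⟩
    by_contra! hgt
    have hwc_le : w c ≤ w (s t) := hwa.antitoneOn (h.1.1 t) hc (hbound δ hδ s p h)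
    have hnear : w (s (t + 1)) - π (s (t + 1)) < w c - π 1 :=
      hc' (s (t + 1)) ⟨(le_max_right c c').trans_lt hgt, (h.1.1 (t + 1)).2⟩
    have hgap := h.w_sub_w_succ_le_sub hπm hwa.antitoneOn hδ t
    linarith

theorem patience_limit_bounded_away_general
    (π w : ℝ → ℝ)
    (hπc : ContinuousOn π (Set.Icc 0 1)) (hwc : ContinuousOn w (Set.Icc 0 1))
    (hπm : StrictMonoOn π (Set.Icc 0 1)) (hwa : StrictAntiOn w (Set.Icc 0 1)) :
    ∀ t : ℕ, ∃ c : ℝ, c < 1 ∧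
      ∀ δ ∈ Set.Ioo (0 : ℝ) 1, ∀ s p : ℕ → ℝ, Optimal δ π w s p → s t ≤ c := by
  intro t
  obtain ⟨c, hc, hbound⟩ := exists_lt_one_forall_implementable_le π w hπc hwc hπm.monotoneOn hwa t
  exact ⟨c, hc.2, fun δ hδ s p hopt => hbound δ hδ s p hopt.1⟩

/-- Patience limit: in each fixed period the optimal knowledge level
is bounded away from 1 uniformly over discount factors. -/
theorem patience_limit_bounded_away
    (π w : ℝ → ℝ)
    (hπc : ContinuousOn π (Set.Icc 0 1)) (hwc : ContinuousOn w (Set.Icc 0 1))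
    (hπm : StrictMonoOn π (Set.Icc 0 1)) (hwa : StrictAntiOn w (Set.Icc 0 1))
    (hGm : StrictMonoOn (fun x => π x + w x) (Set.Icc 0 1)) :
    ∀ t : ℕ, ∃ c : ℝ, c < 1 ∧
      ∀ δ ∈ Set.Ioo (0 : ℝ) 1, ∀ s p : ℕ → ℝ, Optimal δ π w s p → s t ≤ c :=
  patience_limit_bounded_away_general π w hπc hwc hπm hwa
end
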